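/- Let A ∈ M₂(ℝ) with tr A = 0, det A = 1, and define for any traceless B the quadratic form Q_B(z) = −(1/2)⟨J B z, z⟩ where J = [[0,−1],[1,0]] and z ∈ ℝ². Then the average of Q_B over the flow Fl^t = cos t·I + sin t·A satisfies (1/2π)∫₀^{2π} Q_B(Fl^t z) dt = (1/2) Q_{B − A B A}(z) for all z ∈ ℝ². -/

import Mathlib

open Real Matrix MeasureTheory intervalIntegral

noncomputable def Qform (M : Matrix (Fin 2) (Fin 2) ℝ) (z : Fin 2 → ℝ) : ℝ :=
  -(1 / 2) * (((!![0, -1; 1, 0] : Matrix (Fin 2) (Fin 2) ℝ) * M).mulVec z ⬝ᵥ z)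

noncomputable def Fl (A : Matrix (Fin 2) (Fin 2) ℝ) (t : ℝ) : Matrix (Fin 2) (Fin 2) ℝ :=
  (Real.cos t) • (1 : Matrix (Fin 2) (Fin 2) ℝ) + (Real.sin t) • A

/-!
Since `Fl^t z = cos t • z + sin t • A z`, `Q_B(Fl^t z)` is a trigonometric quadratic
`cos² t · Q_B(z) + sin t cos t · β + sin² t · Q_B(A z)` in `t`, whose average over a period is
`(Q_B(z) + Q_B(A z)) / 2`. For a traceless `2 × 2` matrix, `Aᵀ J + J A = (tr A) J = 0`, so
`Q_B(A z) = -Q_{ABA}(z)`, and `Q_B` is linear in `B`.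
-/

theorem transpose_mul_add_mul_eq_trace_smul {R : Type*} [CommRing R]
    (A : Matrix (Fin 2) (Fin 2) R) :
    Aᵀ * !![0, -1; 1, 0] + !![0, -1; 1, 0] * A = A.trace • !![0, -1; 1, 0] := by
  ext i j
  fin_cases i <;> fin_cases j <;>
    simp [trace_fin_two, Matrix.mul_apply, vecMul, dotProduct, Fin.sum_univ_two] <;> ring

theorem Qform_sub (M N : Matrix (Fin 2) (Fin 2) ℝ) (z : Fin 2 → ℝ) :
    Qform (M - N) z = Qform M z - Qform N z := by
  simp only [Qform, Matrix.mul_sub, sub_mulVec, sub_dotProduct]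
  ring

theorem Qform_mulVec_of_trace_eq_zero {A : Matrix (Fin 2) (Fin 2) ℝ} (hA : A.trace = 0)
    (B : Matrix (Fin 2) (Fin 2) ℝ) (z : Fin 2 → ℝ) :
    Qform B (A *ᵥ z) = -Qform (A * B * A) z := by
  have hJ : Aᵀ * !![0, -1; 1, 0] = -(!![0, -1; 1, 0] * A) := by
    rw [eq_neg_iff_add_eq_zero, transpose_mul_add_mul_eq_trace_smul, hA, zero_smul]
  have hconj : Aᵀ * !![0, -1; 1, 0] * B * A = -(!![0, -1; 1, 0] * (A * B * A)) := by
    rw [hJ, Matrix.neg_mul, Matrix.neg_mul]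
    simp only [Matrix.mul_assoc]
  have key : (!![0, -1; 1, 0] * B) *ᵥ (A *ᵥ z) ⬝ᵥ A *ᵥ z
      = -((!![0, -1; 1, 0] * (A * B * A)) *ᵥ z ⬝ᵥ z) := by
    rw [dotProduct_mulVec, ← mulVec_transpose, mulVec_mulVec, mulVec_mulVec, ← Matrix.mul_assoc,
      hconj, neg_mulVec, neg_dotProduct]
  simp only [Qform, key]
  ring

theorem Fl_mulVec (A : Matrix (Fin 2) (Fin 2) ℝ) (t : ℝ) (z : Fin 2 → ℝ) :
    Fl A t *ᵥ z = cos t • z + sin t • (A *ᵥ z) := by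
  simp only [Fl, add_mulVec, smul_mulVec, one_mulVec]

theorem Qform_smul_add_smul (M : Matrix (Fin 2) (Fin 2) ℝ) (c s : ℝ) (z w : Fin 2 → ℝ) :
    Qform M (c • z + s • w) = Qform M z * c ^ 2
      + (-(1 / 2) * ((!![0, -1; 1, 0] * M) *ᵥ z ⬝ᵥ w + (!![0, -1; 1, 0] * M) *ᵥ w ⬝ᵥ z))
        * (s * c)
      + Qform M w * s ^ 2 := by
  simp only [Qform, mulVec_add, mulVec_smul, add_dotProduct, dotProduct_add, smul_dotProduct,
    dotProduct_smul, smul_eq_mul]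
  ring

theorem integral_trig_quadratic (a b c : ℝ) :
    ∫ t in (0 : ℝ)..(2 * π), a * cos t ^ 2 + b * (sin t * cos t) + c * sin t ^ 2
      = π * (a + c) := by
  have hcos : IntervalIntegrable (fun t => a * cos t ^ 2) volume 0 (2 * π) :=
    (by fun_prop : Continuous _).intervalIntegrable _ _
  have hsc : IntervalIntegrable (fun t => b * (sin t * cos t)) volume 0 (2 * π) :=
    (by fun_prop : Continuous _).intervalIntegrable _ _
  have hsin : IntervalIntegrable (fun t => c * sin t ^ 2) volume 0 (2 * π) :=
    (by fun_prop : Continuous _).intervalIntegrable _ _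
  rw [integral_add (hcos.add hsc) hsin, integral_add hcos hsc,
    intervalIntegral.integral_const_mul, intervalIntegral.integral_const_mul,
    intervalIntegral.integral_const_mul, integral_cos_sq, integral_sin_mul_cos₁,
    integral_sin_sq]
  simp only [sin_two_pi, sin_zero, cos_two_pi, cos_zero]
  ring

theorem average_of_quadratic_form_general
    (A B : Matrix (Fin 2) (Fin 2) ℝ)
    (htrA : A.trace = 0)
    (z : Fin 2 → ℝ) :
    (1 / (2 * π)) * ∫ t in (0:ℝ)..(2 * π), Qform B ((Fl A t).mulVec z)
      = (1 / 2) * Qform (B - A * B * A) z := by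
  set β := -(1 / 2) * ((!![0, -1; 1, 0] * B) *ᵥ z ⬝ᵥ A *ᵥ z
    + (!![0, -1; 1, 0] * B) *ᵥ (A *ᵥ z) ⬝ᵥ z)
  have hexpand : ∀ t, Qform B (Fl A t *ᵥ z)
      = Qform B z * cos t ^ 2 + β * (sin t * cos t) + Qform B (A *ᵥ z) * sin t ^ 2 := by
    intro t
    rw [Fl_mulVec, Qform_smul_add_smul]
  rw [integral_congr fun t _ => hexpand t, integral_trig_quadratic, Qform_sub,
    Qform_mulVec_of_trace_eq_zero htrA]
  field_simp
  ring

theorem average_of_quadratic_form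
    (A B : Matrix (Fin 2) (Fin 2) ℝ)
    (htrA : A.trace = 0) (htrB : B.trace = 0) (hdet : A.det = 1)
    (z : Fin 2 → ℝ) :
    (1 / (2 * π)) * ∫ t in (0:ℝ)..(2 * π), Qform B ((Fl A t).mulVec z)
      = (1 / 2) * Qform (B - A * B * A) z :=
  average_of_quadratic_form_general A B htrA z
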